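/- Let 𝒯* ⊆ 𝒯 be an r-test set with m* = |𝒯*| ≥ 2, let #_B ≥ 1 be the number of item pairs with ⊥(a,𝒯*) = r, and let #₀ = r·n(n−1)/2. In any run of SGA producing the sequence T₁,…,T_k, let i be the largest index with #({T₁,…,T_i}) ≥ #_B (taking i = 0 if none exists). Then i < (r/(r+1))·m*·ln((r+1)·#₀/#_B). -/

import Mathlib

open Finset

/-- The set of item pairs: 2-element subsets of the item set `S` (here the whole type `α`). -/
def itemPairs (α : Type*) [Fintype α] [DecidableEq α] : Finset (Finset α) :=
  Finset.univ.filter fun a => a.card = 2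

/-- `⊥(a, F)`: the number of tests in the family `F` that differentiate the item pair `a`,
i.e. the tests `T` with `|T ∩ a| = 1`. -/
def diffBy {α : Type*} [DecidableEq α] (a : Finset α) (F : Finset (Finset α)) : ℕ :=
  (F.filter fun T => (T ∩ a).card = 1).card

/-- `F` is an `r`-test set for the collection `𝒯`: `F ⊆ 𝒯` and every item pair is
differentiated by at least `r` tests of `F`. -/
def IsRTestSet {α : Type*} [Fintype α] [DecidableEq α]
    (r : ℕ) (𝒯 F : Finset (Finset α)) : Prop :=
  F ⊆ 𝒯 ∧ ∀ a ∈ itemPairs α, r ≤ diffBy a F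

/-- The differentiation measure `#(T̄) = ∑_a max (r - ⊥(a,T̄), 0)` (truncated subtraction). -/
def dmeasure {α : Type*} [Fintype α] [DecidableEq α]
    (r : ℕ) (F : Finset (Finset α)) : ℕ :=
  ∑ a ∈ itemPairs α, (r - diffBy a F)

/-- A run of the set cover greedy algorithm SGA: a sequence of distinct tests from `𝒯`,
each chosen greedily to minimize the differentiation measure of the selected family,
selections continue while the measure is positive, and the final measure is `0`. -/
structure SGARun {α : Type*} [Fintype α] [DecidableEq α]
    (r : ℕ) (𝒯 : Finset (Finset α)) (L : List (Finset α)) : Prop where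
  nodup : L.Nodup
  mem : ∀ T ∈ L, T ∈ 𝒯
  greedy : ∀ i : Fin L.length, ∀ T ∈ 𝒯, T ∉ (L.take i).toFinset →
      dmeasure r (insert (L.get i) (L.take i).toFinset) ≤
        dmeasure r (insert T (L.take i).toFinset)
  pos : ∀ i < L.length, 0 < dmeasure r (L.take i).toFinset
  done : dmeasure r L.toFinset = 0

/-!
Let `xⱼ = #({T₁,…,Tⱼ})`, `m* = |𝒯*|` and `K = r·#_B/(r+1)`. A pair that the chosen tests still
differentiate fewer than `r` times is differentiated by at least `r - ⊥(a, chosen)` unchosen tests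
of `𝒯*`, and by one more unless it is tight for `𝒯*`; double counting gives
`(r+1)·xⱼ ≤ r·Σ_{T ∈ 𝒯* unchosen} drop(T) + r·#_B`, where `drop(T)` is the decrease of `#` caused
by adding `T`. Greedy choice bounds every `drop(T)` by `xⱼ - xⱼ₊₁`, so
`xⱼ₊₁ - K ≤ (1 - (r+1)/(r m*))(xⱼ - K) ≤ exp(-(r+1)/(r m*))(xⱼ - K)` while `xⱼ ≥ K`. Hence
`#_B/(r+1) ≤ xᵢ - K < exp(-(r+1)i/(r m*))·#₀`, and taking logarithms gives the bound.
-/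

section Differentiation

variable {α : Type*} [DecidableEq α]

lemma diffBy_mono (a : Finset α) {F G : Finset (Finset α)} (h : F ⊆ G) :
    diffBy a F ≤ diffBy a G :=
  card_le_card (filter_subset_filter _ h)

lemma diffBy_le_card (a : Finset α) (F : Finset (Finset α)) : diffBy a F ≤ #F :=
  card_filter_le _ _

lemma diffBy_insert (a : Finset α) {F : Finset (Finset α)} {T : Finset α} (h : T ∉ F) :
    diffBy a (insert T F) = diffBy a F + if (T ∩ a).card = 1 then 1 else 0 := by
  unfold diffBy
  rw [filter_insert]
  split_ifs
  · exact card_insert_of_notMem fun hT => h (mem_filter.1 hT).1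
  · rfl

lemma diffBy_le_diffBy_sdiff_add (a : Finset α) (F G : Finset (Finset α)) :
    diffBy a F ≤ diffBy a (F \ G) + diffBy a G :=
  calc diffBy a F ≤ diffBy a (F \ G ∪ G) :=
        diffBy_mono a (sdiff_union_self_eq_union (s := F) ▸ subset_union_left)
    _ ≤ diffBy a (F \ G) + diffBy a G := by
        unfold diffBy
        rw [filter_union]
        exact card_union_le _ _

end Differentiation

section Measure

variable {α : Type*} [Fintype α] [DecidableEq α]

lemma dmeasure_anti (r : ℕ) {F G : Finset (Finset α)} (h : F ⊆ G) :
    dmeasure r G ≤ dmeasure r F :=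
  sum_le_sum fun a _ => Nat.sub_le_sub_left (diffBy_mono a h) r

lemma card_itemPairs : #(itemPairs α) = (Fintype.card α).choose 2 := by
  rw [itemPairs, ← powerset_univ, ← powersetCard_eq_filter, card_powersetCard, card_univ]

lemma cast_dmeasure_empty (r : ℕ) :
    (dmeasure r (∅ : Finset (Finset α)) : ℝ) = r * Fintype.card α * (Fintype.card α - 1) / 2 := by
  simp only [dmeasure, diffBy, filter_empty, card_empty, Nat.sub_zero, sum_const, card_itemPairs,
    smul_eq_mul, Nat.cast_mul, Nat.cast_choose_two]
  ring

def deficientPairs (r : ℕ) (F : Finset (Finset α)) : Finset (Finset α) :=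
  (itemPairs α).filter fun a => diffBy a F < r

def tightPairs (r : ℕ) (F : Finset (Finset α)) : Finset (Finset α) :=
  (itemPairs α).filter fun a => diffBy a F = r

lemma card_pos_of_tightPairs {r : ℕ} {F : Finset (Finset α)} (hr : 1 ≤ r)
    (h : 1 ≤ #(tightPairs r F)) : 0 < #F := by
  obtain ⟨a, ha⟩ := card_pos.1 h
  have := (mem_filter.1 ha).2 ▸ diffBy_le_card a F
  omega

def measureDrop (r : ℕ) (F : Finset (Finset α)) (T : Finset α) : ℕ :=
  ((deficientPairs r F).filter fun a => (T ∩ a).card = 1).card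

lemma dmeasure_eq_sum_deficientPairs (r : ℕ) (F : Finset (Finset α)) :
    dmeasure r F = ∑ a ∈ deficientPairs r F, (r - diffBy a F) := by
  rw [dmeasure, deficientPairs, sum_filter_of_ne]
  intro a _ h
  omega

lemma dmeasure_insert_add_measureDrop (r : ℕ) {F : Finset (Finset α)} {T : Finset α}
    (h : T ∉ F) : dmeasure r (insert T F) + measureDrop r F T = dmeasure r F := by
  rw [measureDrop, deficientPairs, filter_filter, card_filter, dmeasure, dmeasure,
    ← sum_add_distrib]
  refine sum_congr rfl fun a _ => ?_
  rw [diffBy_insert a h]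
  split_ifs <;> omega

lemma sum_measureDrop (r : ℕ) (F G : Finset (Finset α)) :
    ∑ T ∈ G, measureDrop r F T = ∑ a ∈ deficientPairs r F, diffBy a G :=
  sum_card_bipartiteAbove_eq_sum_card_bipartiteBelow _

-- For a pair differentiated `c < r` times by the chosen tests, `f ≥ r` times by the test set,
-- and `x` times by its unchosen tests.
lemma succ_mul_sub_le {r c f x : ℕ} (hc : c < r) (hf : r ≤ f) (hx : f ≤ x + c) :
    (r + 1) * (r - c) ≤ r * x + r * if f = r then 1 else 0 := by
  obtain ⟨u, rfl⟩ : ∃ u, r = c + u := ⟨r - c, by omega⟩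
  rw [Nat.add_sub_cancel_left]
  split_ifs
  · nlinarith
  · nlinarith [Nat.mul_le_mul_left (c + u) (show u + 1 ≤ x by omega)]

lemma succ_mul_dmeasure_le {r : ℕ} {Fstar : Finset (Finset α)}
    (hcov : ∀ a ∈ itemPairs α, r ≤ diffBy a Fstar) (F : Finset (Finset α)) :
    (r + 1) * dmeasure r F ≤ r * ∑ T ∈ Fstar \ F, measureDrop r F T
      + r * #(tightPairs r Fstar) := by
  have htight : ((deficientPairs r F).filter fun a => diffBy a Fstar = r).card ≤
      #(tightPairs r Fstar) :=
    card_le_card (filter_subset_filter _ (filter_subset _ _))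
  calc (r + 1) * dmeasure r F
      = ∑ a ∈ deficientPairs r F, (r + 1) * (r - diffBy a F) := by
        rw [dmeasure_eq_sum_deficientPairs, mul_sum]
    _ ≤ ∑ a ∈ deficientPairs r F,
          (r * diffBy a (Fstar \ F) + r * if diffBy a Fstar = r then 1 else 0) := by
        refine sum_le_sum fun a ha => ?_
        obtain ⟨ha, hdef⟩ := mem_filter.1 ha
        exact succ_mul_sub_le hdef (hcov a ha) (diffBy_le_diffBy_sdiff_add a Fstar F)
    _ ≤ r * ∑ T ∈ Fstar \ F, measureDrop r F T
          + r * #(tightPairs r Fstar) := by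
        rw [sum_add_distrib, ← mul_sum, ← mul_sum, ← card_filter, sum_measureDrop]
        gcongr

-- Stated with `dmeasure r (insert T₀ F)` on the left, so that no truncated subtraction occurs.
lemma greedy_step {r : ℕ} {𝒯 Fstar F : Finset (Finset α)} (hFstar : IsRTestSet r 𝒯 Fstar)
    {T₀ : Finset α} (hgreedy : ∀ T ∈ 𝒯, T ∉ F → dmeasure r (insert T₀ F) ≤ dmeasure r (insert T F)) :
    (r + 1) * dmeasure r F + r * #Fstar * dmeasure r (insert T₀ F) ≤
      r * #Fstar * dmeasure r F + r * #(tightPairs r Fstar) := by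
  set D := dmeasure r F
  set D' := dmeasure r (insert T₀ F)
  have hdrop : ∀ T ∈ Fstar \ F, measureDrop r F T ≤ D - D' := fun T hT => by
    obtain ⟨hTF, hT⟩ := mem_sdiff.1 hT
    have := dmeasure_insert_add_measureDrop r hT
    have := hgreedy T (hFstar.1 hTF) hT
    omega
  have hsum : ∑ T ∈ Fstar \ F, measureDrop r F T ≤ #Fstar * (D - D') :=
    calc ∑ T ∈ Fstar \ F, measureDrop r F T ≤ #(Fstar \ F) * (D - D') :=
          smul_eq_mul (α := ℕ) _ _ ▸ sum_le_card_nsmul _ _ _ hdrop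
      _ ≤ #Fstar * (D - D') := Nat.mul_le_mul_right _ (card_le_card sdiff_subset)
  have hD' : D' ≤ D := dmeasure_anti r (subset_insert T₀ F)
  calc (r + 1) * D + r * #Fstar * D'
      ≤ r * ∑ T ∈ Fstar \ F, measureDrop r F T + r * #(tightPairs r Fstar)
        + r * #Fstar * D' := by grw [succ_mul_dmeasure_le hFstar.2 F]
    _ ≤ r * #Fstar * (D - D') + r * #(tightPairs r Fstar)
        + r * #Fstar * D' := by grw [hsum]; simp only [mul_assoc, le_refl]
    _ = r * #Fstar * D + r * #(tightPairs r Fstar) := by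
        rw [add_right_comm, ← mul_add, Nat.sub_add_cancel hD']

end Measure

section Run

variable {α : Type*} [Fintype α] [DecidableEq α]

lemma dmeasure_take_anti (r : ℕ) (L : List (Finset α)) {i j : ℕ} (h : j ≤ i) :
    dmeasure r (L.take i).toFinset ≤ dmeasure r (L.take j).toFinset :=
  dmeasure_anti r fun _ hT =>
    List.mem_toFinset.2 (List.take_subset_take_left L h (List.mem_toFinset.1 hT))

lemma SGARun.step {r : ℕ} {𝒯 Fstar : Finset (Finset α)} {L : List (Finset α)}
    (hrun : SGARun r 𝒯 L) (hFstar : IsRTestSet r 𝒯 Fstar) {j : ℕ} (hj : j < L.length) :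
    (r + 1) * dmeasure r (L.take j).toFinset + r * #Fstar * dmeasure r (L.take (j + 1)).toFinset ≤
      r * #Fstar * dmeasure r (L.take j).toFinset
        + r * #(tightPairs r Fstar) := by
  have htake : (L.take (j + 1)).toFinset = insert (L.get ⟨j, hj⟩) (L.take j).toFinset := by
    rw [List.take_add_one, List.toFinset_append, List.getElem?_eq_getElem hj]
    simp
  rw [htake]
  exact greedy_step hFstar (hrun.greedy ⟨j, hj⟩)

end Run

-- The step hypothesis says `x (j + 1) - K ≤ (1 - q / p) * (x j - K)`, and `1 - t ≤ exp (-t)`.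
lemma sub_le_exp_mul_of_step {x : ℕ → ℝ} {p q K : ℝ} (hp : 0 < p) {n : ℕ}
    (hstep : ∀ j < n, q * x j + p * x (j + 1) ≤ p * x j + q * K) (hK : ∀ j < n, K ≤ x j) :
    x n - K ≤ Real.exp (-(q / p * n)) * (x 0 - K) := by
  induction n with
  | zero => simp
  | succ n ih =>
    have hcontract : x (n + 1) - K ≤ (1 - q / p) * (x n - K) := by
      rw [← mul_le_mul_iff_right₀ hp, ← mul_assoc, mul_sub p 1, mul_div_cancel₀ q hp.ne']
      linarith [hstep n n.lt_succ_self]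
    calc x (n + 1) - K ≤ (1 - q / p) * (x n - K) := hcontract
      _ ≤ Real.exp (-(q / p)) * (x n - K) := by
          gcongr
          · linarith [hK n n.lt_succ_self]
          · linarith [Real.add_one_le_exp (-(q / p))]
      _ ≤ Real.exp (-(q / p)) * (Real.exp (-(q / p * n)) * (x 0 - K)) := by
          gcongr
          exact ih (fun j hj => hstep j (by omega)) (fun j hj => hK j (by omega))
      _ = Real.exp (-(q / p * ↑(n + 1))) * (x 0 - K) := by
          rw [← mul_assoc, ← Real.exp_add]
          push_cast
          ring_nf

lemma lt_mul_log_of_step {x : ℕ → ℝ} {p q K b : ℝ} (hp : 0 < p) (hq : 0 < q) (hK : 0 < K)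
    (hb : 0 < b) {n : ℕ} (hstep : ∀ j < n, q * x j + p * x (j + 1) ≤ p * x j + q * K)
    (hx : ∀ j ≤ n, K + b ≤ x j) :
    (n : ℝ) < p / q * Real.log (x 0 / b) := by
  have hdecay := sub_le_exp_mul_of_step hp hstep fun j hj => by linarith [hx j hj.le]
  have hexp : Real.exp (q / p * n) < x 0 / b := by
    rw [lt_div_iff₀ hb, ← lt_div_iff₀' (Real.exp_pos _), div_eq_mul_inv, ← Real.exp_neg]
    nlinarith [Real.exp_pos (-(q / p * n)), hx n le_rfl]
  have hlog := (Real.lt_log_iff_exp_lt ((Real.exp_pos _).trans hexp)).2 hexp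
  rw [div_mul_eq_mul_div, div_lt_iff₀ hp] at hlog
  rw [div_mul_eq_mul_div, lt_div_iff₀ hq]
  linarith

theorem stmt_8_general {α : Type*} [Fintype α] [DecidableEq α]
    (r : ℕ) (hr : 1 ≤ r)
    (𝒯 Fstar : Finset (Finset α)) (hFstar : IsRTestSet r 𝒯 Fstar)
    (B : ℕ) (hBdef : B = ((itemPairs α).filter fun a => diffBy a Fstar = r).card)
    (hB : 1 ≤ B)
    (N0 : ℝ)
    (hN0 : N0 = (r : ℝ) * (Fintype.card α) * ((Fintype.card α : ℝ) - 1) / 2)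
    (L : List (Finset α)) (hrun : SGARun r 𝒯 L) :
    ∀ i ≤ L.length, B ≤ dmeasure r (L.take i).toFinset →
      (i : ℝ) < ((r : ℝ) / ((r : ℝ) + 1)) * (Fstar.card : ℝ) *
        Real.log (((r : ℝ) + 1) * N0 / (B : ℝ)) := by
  intro i hi hBi
  have hBtight : B = #(tightPairs r Fstar) := hBdef
  have hm : (0 : ℝ) < #Fstar := by
    exact_mod_cast card_pos_of_tightPairs hr (hBtight ▸ hB)
  have hKB : (r * B / (r + 1) : ℝ) + B / (r + 1) = B := by field_simp
  have hstep : ∀ j < i, (r + 1) * (dmeasure r (L.take j).toFinset : ℝ)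
      + r * #Fstar * dmeasure r (L.take (j + 1)).toFinset
      ≤ r * #Fstar * dmeasure r (L.take j).toFinset + (r + 1) * (r * B / (r + 1)) := by
    intro j hj
    rw [mul_div_cancel₀ _ (by positivity), hBtight]
    exact_mod_cast hrun.step hFstar (by omega)
  have key := lt_mul_log_of_step (x := fun j => (dmeasure r (L.take j).toFinset : ℝ))
    (b := B / (r + 1)) (by positivity) (by positivity) (by positivity) (by positivity) hstep
    fun j hj => by
      rw [hKB]
      exact_mod_cast hBi.trans (dmeasure_take_anti r L hj)
  rwa [List.take_zero, List.toFinset_nil, cast_dmeasure_empty, ← hN0, div_div_eq_mul_div,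
    mul_comm N0, mul_div_right_comm] at key

/-- in any run of SGA, every index `i` whose prefix still has measure at least
`#_B` (in particular the largest such index, with `i = 0` if none exists) satisfies
`i < (r/(r+1))·m*·ln((r+1)·#₀/#_B)`. -/
theorem stmt_8 {α : Type*} [Fintype α] [DecidableEq α]
    (r : ℕ) (hr : 1 ≤ r) (hn : 2 ≤ Fintype.card α)
    (𝒯 Fstar : Finset (Finset α)) (hFstar : IsRTestSet r 𝒯 Fstar)
    (hm : 2 ≤ Fstar.card)
    (B : ℕ) (hBdef : B = ((itemPairs α).filter fun a => diffBy a Fstar = r).card)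
    (hB : 1 ≤ B)
    (N0 : ℝ)
    (hN0 : N0 = (r : ℝ) * (Fintype.card α) * ((Fintype.card α : ℝ) - 1) / 2)
    (L : List (Finset α)) (hrun : SGARun r 𝒯 L) :
    ∀ i ≤ L.length, B ≤ dmeasure r (L.take i).toFinset →
      (i : ℝ) < ((r : ℝ) / ((r : ℝ) + 1)) * (Fstar.card : ℝ) *
        Real.log (((r : ℝ) + 1) * N0 / (B : ℝ)) :=
  stmt_8_general r hr 𝒯 Fstar hFstar B hBdef hB N0 hN0 L hrun
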